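/- arXiv:2312.14993 — 2 statements merged into one kernel-verified Lean document; each statement's English description precedes it below -/
import Mathlib

section
/- For every real t ≥ 2 and every λ > 0, the quantity 2μ(Ω_1(t,λ)) equals: 1 if λ ≤ 1 − 2/t; (1/8)(4 + t² − 2λt² + λ²t² + 4t(1−λ)·log(2/(t(1−λ)))) if 1 − 2/t ≤ λ < 1; (1/8)(4 − t² + 2λt² − λ²t² − 4t(λ−1)·log(2/(t(λ−1)))) if 1 ≤ λ < 1 + 2/t; and 0 if λ ≥ 1 + 2/t. (Here a term of the form s·log(2/(ts)) is interpreted as 0 when s = 0.) -/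
open MeasureTheory

noncomputable section

/-- The limit domain `Ω_D(t,λ) ⊆ [-1/2,1/2]^{2D+1}`, with coordinates
`(x, y_{-D+1}, …, y_D)`: the coordinate of index `0` is `x` and the coordinate of index
`i ∈ {1, …, 2D}` is `y_j` with `j = i - D`.  It consists of the points with `x ≥ 0` such
that `y_j ∉ [y_0 + (j-λ)t/(4x), y_0 + j·t/(4x)]` for all `j ≠ 0`.
For `D = 1` this is the set `Ω_1(t,λ)` of points `(x, y_0, y_1) ∈ [-1/2,1/2]³` with
`x ≥ 0` and `y_1 ∉ [y_0 + (1-λ)t/(4x), y_0 + t/(4x)]`. -/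
def Omega (D : ℕ) (t lam : ℝ) : Set (Fin (2 * D + 1) → ℝ) :=
  {v | (∀ i, v i ∈ Set.Icc (-(1 : ℝ) / 2) (1 / 2)) ∧ 0 ≤ v ⟨0, by omega⟩ ∧
    ∀ i : Fin (2 * D + 1), (i : ℕ) ≠ 0 → (i : ℕ) ≠ D →
      v i ∉ Set.Icc
        (v ⟨D, by omega⟩ + (((i : ℕ) : ℝ) - (D : ℝ) - lam) * t / (4 * v ⟨0, by omega⟩))
        (v ⟨D, by omega⟩ + (((i : ℕ) : ℝ) - (D : ℝ)) * t / (4 * v ⟨0, by omega⟩))}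

/-!
For `0 < x ≤ 1/2` and `t ≥ 2` the right end `y₀ + t/(4x)` of the excluded interval is at least
`1/2 ≥ y₁`, so off the null set `x = 0` the defining condition of `Ω₁` reads `y₁ < y₀ + c/x`
with `c = (1-λ)t/4`. By Fubini, `μ(Ω₁) = ∫₀^{1/2} sliceArea (c/x) dx`, where
`sliceArea s = ∫ₛ^{s+1} unitRamp` is the area of `{y₁ < y₀ + s}` in the square. The reflection
`u ↦ 1 - u` gives `sliceArea (-s) = 1 - sliceArea s`, hence the `x`-integrals satisfy
`sliceIntegral c + sliceIntegral (-c) = 1/2`, and only `c ≥ 0` has to be computed: the integral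
is `1/2` for `c ≥ 1/2` and `1/4 + c² - c log(2c)` for `0 ≤ c < 1/2`.
-/

open Set intervalIntegral

namespace OmegaOne

def unitRamp (u : ℝ) : ℝ := max 0 (min 1 u)

lemma continuous_unitRamp : Continuous unitRamp := by
  unfold unitRamp; fun_prop

lemma unitRamp_nonneg (u : ℝ) : 0 ≤ unitRamp u := le_max_left _ _

lemma unitRamp_le_one (u : ℝ) : unitRamp u ≤ 1 := max_le zero_le_one (min_le_left _ _)

lemma unitRamp_of_one_le {u : ℝ} (hu : 1 ≤ u) : unitRamp u = 1 := by
  simp [unitRamp, hu]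

lemma unitRamp_of_mem_Icc {u : ℝ} (hu : u ∈ Icc 0 1) : unitRamp u = u := by
  simp [unitRamp, hu.1, hu.2]

lemma unitRamp_add_unitRamp_one_sub (u : ℝ) : unitRamp u + unitRamp (1 - u) = 1 := by
  simp only [unitRamp, max_def, min_def]
  split_ifs <;> linarith

lemma intervalIntegrable_unitRamp (a b : ℝ) : IntervalIntegrable unitRamp volume a b :=
  continuous_unitRamp.intervalIntegrable a b

def sliceArea (s : ℝ) : ℝ := ∫ u in s..s + 1, unitRamp u

lemma continuous_sliceArea : Continuous sliceArea := by
  have hprim := continuous_primitive (fun a b => intervalIntegrable_unitRamp a b) 0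
  have h : sliceArea = fun s => (∫ u in 0..s + 1, unitRamp u) - ∫ u in 0..s, unitRamp u := by
    funext s
    rw [integral_interval_sub_left (intervalIntegrable_unitRamp _ _)
      (intervalIntegrable_unitRamp _ _), sliceArea]
  rw [h]
  exact (hprim.comp (continuous_add_const 1)).sub hprim

lemma sliceArea_nonneg (s : ℝ) : 0 ≤ sliceArea s :=
  integral_nonneg (by linarith) fun u _ => unitRamp_nonneg u

lemma sliceArea_le_one (s : ℝ) : sliceArea s ≤ 1 :=
  calc sliceArea s ≤ ∫ _ in s..s + 1, (1 : ℝ) :=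
        integral_mono_on (by linarith) (intervalIntegrable_unitRamp _ _) intervalIntegrable_const
          fun u _ => unitRamp_le_one u
    _ = 1 := by simp

lemma sliceArea_neg (s : ℝ) : sliceArea (-s) = 1 - sliceArea s := by
  have hrefl : ∫ u in s..s + 1, unitRamp (1 - u) = sliceArea (-s) := by
    rw [integral_comp_sub_left, sliceArea]
    congr 1 <;> ring
  have hsymm : ∀ u, unitRamp (1 - u) = 1 - unitRamp u := fun u =>
    eq_sub_of_add_eq' (unitRamp_add_unitRamp_one_sub u)
  simp_rw [← hrefl, hsymm]
  rw [integral_sub intervalIntegrable_const (intervalIntegrable_unitRamp _ _), sliceArea]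
  simp

lemma sliceArea_of_one_le {s : ℝ} (hs : 1 ≤ s) : sliceArea s = 1 := by
  rw [sliceArea, integral_congr (g := fun _ => 1) fun u hu => ?_]
  · simp
  · rw [uIcc_of_le (by linarith)] at hu
    exact unitRamp_of_one_le (hs.trans hu.1)

lemma sliceArea_of_mem_Icc {s : ℝ} (hs : s ∈ Icc 0 1) : sliceArea s = (1 - s ^ 2) / 2 + s := by
  have hlow : ∫ u in s..1, unitRamp u = ∫ u in s..1, u := integral_congr fun u hu => by
    rw [uIcc_of_le hs.2] at hu
    exact unitRamp_of_mem_Icc ⟨hs.1.trans hu.1, hu.2⟩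
  have hhigh : ∫ u in 1..s + 1, unitRamp u = ∫ _ in 1..s + 1, (1 : ℝ) :=
    integral_congr fun u hu => by
      rw [uIcc_of_le (by linarith [hs.1])] at hu
      exact unitRamp_of_one_le hu.1
  rw [sliceArea, ← integral_add_adjacent_intervals (b := 1) (intervalIntegrable_unitRamp _ _)
    (intervalIntegrable_unitRamp _ _), hlow, hhigh, integral_id, intervalIntegral.integral_const,
    smul_eq_mul]
  ring

def sliceIntegral (c : ℝ) : ℝ := ∫ x in Ioc (0 : ℝ) (1 / 2), sliceArea (c / x)

lemma integrableOn_sliceArea_div (c : ℝ) :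
    IntegrableOn (fun x => sliceArea (c / x)) (Ioc (0 : ℝ) (1 / 2)) := by
  refine Measure.integrableOn_of_bounded (M := 1) measure_Ioc_lt_top.ne
    (continuous_sliceArea.measurable.comp (measurable_const.div measurable_id)).aestronglyMeasurable
    (ae_of_all _ fun x => ?_)
  rw [Real.norm_of_nonneg (sliceArea_nonneg _)]
  exact sliceArea_le_one _

lemma sliceIntegral_nonneg (c : ℝ) : 0 ≤ sliceIntegral c :=
  setIntegral_nonneg measurableSet_Ioc fun _ _ => sliceArea_nonneg _

lemma sliceIntegral_add_sliceIntegral_neg (c : ℝ) :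
    sliceIntegral c + sliceIntegral (-c) = 1 / 2 := by
  rw [sliceIntegral, sliceIntegral, ← integral_add (integrableOn_sliceArea_div c)
    (integrableOn_sliceArea_div (-c))]
  simp_rw [neg_div, sliceArea_neg, add_sub_cancel]
  simp

lemma sliceIntegral_of_half_le {c : ℝ} (hc : 1 / 2 ≤ c) : sliceIntegral c = 1 / 2 := by
  rw [sliceIntegral, setIntegral_congr_fun measurableSet_Ioc (g := fun _ => 1)
    fun x hx => sliceArea_of_one_le ((one_le_div hx.1).2 (hx.2.trans hc))]
  simp

lemma integral_sliceArea_div_of_pos {c : ℝ} (hc : 0 < c) (hc' : c ≤ 1 / 2) :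
    ∫ x in c..1 / 2, sliceArea (c / x) = 1 / 4 - c + c ^ 2 - c * Real.log (2 * c) := by
  have hpos : ∀ x ∈ uIcc c (1 / 2), 0 < x := fun x hx => by
    rw [uIcc_of_le hc'] at hx; exact hc.trans_le hx.1
  have hderiv : ∀ x ∈ uIcc c (1 / 2), HasDerivAt
      (fun y => y / 2 + c * Real.log y + c ^ 2 / 2 * y⁻¹) (sliceArea (c / x)) x := by
    intro x hx
    have hx0 := hpos x hx
    have hcx : c / x ≤ 1 := by
      rw [div_le_one hx0]; rw [uIcc_of_le hc'] at hx; exact hx.1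
    refine ((((hasDerivAt_id x).div_const 2).add ((Real.hasDerivAt_log hx0.ne').const_mul c)).add
      ((hasDerivAt_inv hx0.ne').const_mul _)).congr_deriv ?_
    rw [sliceArea_of_mem_Icc ⟨(div_pos hc hx0).le, hcx⟩]
    field_simp
    ring
  have hcont : ContinuousOn (fun x => sliceArea (c / x)) (uIcc c (1 / 2)) :=
    continuous_sliceArea.comp_continuousOn
      (continuousOn_const.div continuousOn_id fun x hx => (hpos x hx).ne')
  rw [integral_eq_sub_of_hasDerivAt hderiv hcont.intervalIntegrable,
    Real.log_mul two_ne_zero hc.ne', one_div, Real.log_inv]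
  field_simp
  ring

lemma sliceIntegral_of_nonneg_of_lt_half {c : ℝ} (hc : 0 ≤ c) (hc' : c < 1 / 2) :
    sliceIntegral c = 1 / 4 + c ^ 2 - c * Real.log (2 * c) := by
  rcases hc.eq_or_lt with rfl | hc
  · have := sliceIntegral_add_sliceIntegral_neg 0
    rw [neg_zero] at this
    simp only [zero_pow two_ne_zero, zero_mul]
    linarith
  rw [sliceIntegral, ← Ioc_union_Ioc_eq_Ioc hc.le hc'.le,
    setIntegral_union (Ioc_disjoint_Ioc_of_le le_rfl) measurableSet_Ioc
      ((integrableOn_sliceArea_div c).mono_set (Ioc_subset_Ioc le_rfl hc'.le))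
      ((integrableOn_sliceArea_div c).mono_set (Ioc_subset_Ioc hc.le le_rfl)),
    setIntegral_congr_fun measurableSet_Ioc (g := fun _ => 1)
      fun x hx => sliceArea_of_one_le ((one_le_div hx.1).2 hx.2),
    ← integral_of_le hc'.le, integral_sliceArea_div_of_pos hc hc'.le]
  simp [Real.volume_real_Ioc_of_le hc.le]
  ring

lemma _root_.MeasureTheory.Measure.prod_setOf_fst_mem_and_snd_mem {α β : Type*}
    [MeasurableSpace α] [MeasurableSpace β] (μ : Measure α) (ν : Measure β) [SFinite ν]
    {s : Set α} (hs : MeasurableSet s) {S : α → Set β}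
    (hm : MeasurableSet {p : α × β | p.1 ∈ s ∧ p.2 ∈ S p.1}) :
    μ.prod ν {p | p.1 ∈ s ∧ p.2 ∈ S p.1} = ∫⁻ x in s, ν (S x) ∂μ := by
  rw [Measure.prod_apply hm, ← lintegral_indicator hs]
  congr 1
  funext x
  by_cases hx : x ∈ s <;> simp [hx, preimage]

local notation "𝕀" => Icc (-(1 : ℝ) / 2) (1 / 2)

def belowLine (s : ℝ) : Set (ℝ × ℝ) := {q | q.1 ∈ 𝕀 ∧ q.2 ∈ 𝕀 ∩ Iio (q.1 + s)}

lemma measurableSet_belowLine (s : ℝ) : MeasurableSet (belowLine s) :=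
  (measurable_fst measurableSet_Icc).inter <| (measurable_snd measurableSet_Icc).inter <|
    measurableSet_lt measurable_snd (measurable_fst.add_const s)

lemma volume_Icc_half_inter_Iio (k : ℝ) :
    volume (𝕀 ∩ Iio k) = ENNReal.ofReal (unitRamp (k + 1 / 2)) := by
  have hae : (𝕀 ∩ Iio k : Set ℝ) =ᵐ[volume] (Ico (-(1 : ℝ) / 2) (1 / 2) ∩ Iio k : Set ℝ) :=
    Ico_ae_eq_Icc.symm.inter Filter.EventuallyEq.rfl
  rw [measure_congr hae, Ico_inter_Iio, Real.volume_Ico,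
    unitRamp, ENNReal.ofReal_max, ENNReal.ofReal_zero, max_eq_right zero_le, ← min_sub_sub_right]
  congr 2 <;> ring

lemma volume_belowLine (s : ℝ) : volume (belowLine s) = ENNReal.ofReal (sliceArea s) := by
  rw [Measure.volume_eq_prod, belowLine,
    Measure.prod_setOf_fst_mem_and_snd_mem _ _ (S := fun y => 𝕀 ∩ Iio (y + s)) measurableSet_Icc
      (measurableSet_belowLine s)]
  have hslice : ∀ y, volume (𝕀 ∩ Iio (y + s)) = ENNReal.ofReal (unitRamp (y + (s + 1 / 2))) :=
    fun y => by rw [volume_Icc_half_inter_Iio, add_assoc]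
  have hint : IntegrableOn (fun y => unitRamp (y + (s + 1 / 2))) 𝕀 :=
    (continuous_unitRamp.comp (continuous_add_const _)).integrableOn_Icc
  simp_rw [hslice]
  rw [← ofReal_integral_eq_lintegral_ofReal hint
    (ae_of_all _ fun _ => unitRamp_nonneg _), integral_Icc_eq_integral_Ioc,
    ← integral_of_le (by norm_num), integral_comp_add_right, sliceArea]
  congr 2 <;> ring

def omegaModel (c : ℝ) : Set (ℝ × ℝ × ℝ) :=
  {p | p.1 ∈ Ioc 0 (1 / 2) ∧ p.2 ∈ belowLine (c / p.1)}

lemma measurableSet_omegaModel (c : ℝ) : MeasurableSet (omegaModel c) :=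
  (measurable_fst measurableSet_Ioc).inter <| (measurable_snd.fst measurableSet_Icc).inter <|
    (measurable_snd.snd measurableSet_Icc).inter <| measurableSet_lt measurable_snd.snd
      (measurable_snd.fst.add (measurable_const.div measurable_fst))

lemma volume_omegaModel (c : ℝ) : volume (omegaModel c) = ENNReal.ofReal (sliceIntegral c) := by
  rw [Measure.volume_eq_prod, omegaModel,
    Measure.prod_setOf_fst_mem_and_snd_mem _ _ (S := fun x => belowLine (c / x)) measurableSet_Ioc
      (measurableSet_omegaModel c)]
  simp_rw [volume_belowLine]
  rw [← ofReal_integral_eq_lintegral_ofReal (integrableOn_sliceArea_div c)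
    (ae_of_all _ fun _ => sliceArea_nonneg _), sliceIntegral]

def omegaCoords (v : Fin 3 → ℝ) : ℝ × ℝ × ℝ := (v 0, v 1, v 2)

lemma measurePreserving_omegaCoords : MeasurePreserving omegaCoords :=
  ((MeasurePreserving.id volume).prod (volume_preserving_finTwoArrow ℝ)).comp
    (volume_preserving_piFinSuccAbove (fun _ : Fin 3 => ℝ) 0)

lemma mem_omega_one_iff (t lam : ℝ) (v : Fin (2 * 1 + 1) → ℝ) :
    v ∈ Omega 1 t lam ↔ (∀ i, v i ∈ 𝕀) ∧ 0 ≤ v 0 ∧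
      v 2 ∉ Icc (v 1 + (1 - lam) * t / (4 * v 0)) (v 1 + t / (4 * v 0)) := by
  simp [Omega, Fin.forall_fin_succ]

lemma mem_omega_one_iff_of_ne_zero {t lam : ℝ} (ht : 2 ≤ t) {v : Fin (2 * 1 + 1) → ℝ}
    (hv : v 0 ≠ 0) :
    v ∈ Omega 1 t lam ↔ omegaCoords v ∈ omegaModel ((1 - lam) * t / 4) := by
  rw [mem_omega_one_iff, ← div_div]
  constructor
  · rintro ⟨hbox, hx₀, hnot⟩
    have hx : 0 < v 0 := hx₀.lt_of_ne' hv
    have hright : v 2 ≤ v 1 + t / (4 * v 0) := by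
      have : 1 ≤ t / (4 * v 0) := by rw [le_div_iff₀ (by positivity)]; linarith [(hbox 0).2]
      linarith [(hbox 1).1, (hbox 2).2]
    exact ⟨⟨hx, (hbox 0).2⟩, hbox 1, hbox 2, lt_of_not_ge fun h => hnot ⟨h, hright⟩⟩
  · rintro ⟨⟨hx, hx'⟩, hy₀, hy₁, hlt⟩
    refine ⟨fun i => ?_, hx.le, fun h => h.1.not_gt hlt⟩
    fin_cases i
    exacts [⟨le_trans (by norm_num) hx.le, hx'⟩, hy₀, hy₁]

lemma volume_omega_one {t : ℝ} (ht : 2 ≤ t) (lam : ℝ) :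
    volume (Omega 1 t lam) = ENNReal.ofReal (sliceIntegral ((1 - lam) * t / 4)) := by
  have hnull : volume {v : Fin (2 * 1 + 1) → ℝ | v 0 ≠ 0}ᶜ = 0 := by
    simpa [compl_ofPred, volume_pi] using Measure.pi_hyperplane _ (0 : Fin 3) 0
  have hpre :
      Omega 1 t lam ∩ {v | v 0 ≠ 0} = omegaCoords ⁻¹' omegaModel ((1 - lam) * t / 4) := by
    ext v
    refine ⟨fun ⟨hv, h0⟩ => (mem_omega_one_iff_of_ne_zero ht h0).1 hv, fun hv => ?_⟩
    have h0 : v 0 ≠ 0 := hv.1.1.ne'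
    exact ⟨(mem_omega_one_iff_of_ne_zero ht h0).2 hv, h0⟩
  rw [← measure_inter_conull hnull, hpre, measurePreserving_omegaCoords.measure_preimage
    (measurableSet_omegaModel _).nullMeasurableSet, volume_omegaModel]

end OmegaOne

open OmegaOne in
theorem stmt2_general (t : ℝ) (ht : 2 ≤ t) (lam : ℝ) :
    2 * (volume (Omega 1 t lam)).toReal =
      if lam ≤ 1 - 2 / t then 1
      else if lam < 1 then
        (1 / 8) * (4 + t ^ 2 - 2 * lam * t ^ 2 + lam ^ 2 * t ^ 2 +
          4 * t * (1 - lam) * Real.log (2 / (t * (1 - lam))))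
      else if lam < 1 + 2 / t then
        (1 / 8) * (4 - t ^ 2 + 2 * lam * t ^ 2 - lam ^ 2 * t ^ 2 -
          4 * t * (lam - 1) * Real.log (2 / (t * (lam - 1))))
      else 0 := by
  have ht0 : 0 < t := by linarith
  set c := (1 - lam) * t / 4 with hc
  rw [volume_omega_one ht, ENNReal.toReal_ofReal (sliceIntegral_nonneg _)]
  have hsymm : sliceIntegral c = 1 / 2 - sliceIntegral (-c) :=
    eq_sub_of_add_eq (sliceIntegral_add_sliceIntegral_neg c)
  have hA : lam ≤ 1 - 2 / t ↔ 1 / 2 ≤ c := by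
    rw [le_sub_comm, div_le_iff₀ ht0]; constructor <;> intro h <;> linarith
  have hB : lam < 1 ↔ 0 < c := by
    constructor <;> intro h <;> nlinarith
  have hC : lam < 1 + 2 / t ↔ -(1 / 2) < c := by
    rw [← sub_lt_iff_lt_add', lt_div_iff₀ ht0]; constructor <;> intro h <;> linarith
  simp only [hA, hB, hC]
  split_ifs with h₁ h₂ h₃
  · rw [sliceIntegral_of_half_le h₁]
    norm_num
  · have hlog : 2 / (t * (1 - lam)) = (2 * c)⁻¹ := by
      rw [hc, show 2 * ((1 - lam) * t / 4) = t * (1 - lam) / 2 by ring, inv_div]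
    rw [sliceIntegral_of_nonneg_of_lt_half h₂.le (not_le.1 h₁), hlog, Real.log_inv, hc]
    ring
  · have hlog : 2 / (t * (lam - 1)) = (2 * -c)⁻¹ := by
      rw [hc, show 2 * -((1 - lam) * t / 4) = t * (lam - 1) / 2 by ring, inv_div]
    rw [hsymm, sliceIntegral_of_nonneg_of_lt_half (neg_nonneg.2 (not_lt.1 h₂)) (by linarith),
      hlog, Real.log_inv, hc]
    ring
  · rw [hsymm, sliceIntegral_of_half_le (by linarith [not_lt.1 h₃])]
    norm_num

/-- the explicit value of `2μ(Ω_1(t,λ))` for `t ≥ 2` and `λ > 0`.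
(Note that a term `s·log(2/(t·s))` is interpreted as `0` when `s = 0`; this is
automatic in Lean since `2/0 = 0` and `log 0 = 0`.) -/
theorem stmt2 (t : ℝ) (ht : 2 ≤ t) (lam : ℝ) (hlam : 0 < lam) :
    2 * (volume (Omega 1 t lam)).toReal =
      if lam ≤ 1 - 2 / t then 1
      else if lam < 1 then
        (1 / 8) * (4 + t ^ 2 - 2 * lam * t ^ 2 + lam ^ 2 * t ^ 2 +
          4 * t * (1 - lam) * Real.log (2 / (t * (1 - lam))))
      else if lam < 1 + 2 / t then
        (1 / 8) * (4 - t ^ 2 + 2 * lam * t ^ 2 - lam ^ 2 * t ^ 2 -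
          4 * t * (lam - 1) * Real.log (2 / (t * (lam - 1))))
      else 0 :=
  stmt2_general t ht lam
end
end

section
/- Let D ≥ 1 be an integer and t > 2/D a real number. Then there exists J_0 > 0 such that for every real J ≥ J_0, every integer m with 0 ≤ m ≤ J, and all x_1, x_2 ∈ [−J, J], one has m/(x_1 + tJ²) < (m + D)/(x_2 + tJ²); that is, an observer at (−tJ², 0) looking into the square [−J,J]² sees every point of the horizontal row at height m before any point of the row at height m + D. -/
/-!
Put `s = tJ²`. Over `x ∈ [-J, J]` the slope `m / (x + s)` is largest at `x = -J` and
`(m + D) / (x + s)` smallest at `x = J`, and `m / (s - J) < (m + D) / (s + J)` amounts to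
`(2m + D) J < D s`. Since `m ≤ J`, this holds once `D < (tD - 2) J`, i.e. for all large `J`
precisely because `t > 2 / D`.
-/

open Set

lemma div_sub_lt_div_add {m D s J : ℝ} (hm : 0 ≤ m) (hD : 0 < D) (hJ : 0 < J)
    (h : (2 * m + D) * J < D * s) : m / (s - J) < (m + D) / (s + J) := by
  have hJs : J < s := by nlinarith
  rw [div_lt_div_iff₀ (by linarith) (by linarith)]
  linarith

lemma div_add_lt_div_add_of_mem_Icc {m D s J x₁ x₂ : ℝ} (hm : 0 ≤ m) (hD : 0 < D) (hJ : 0 < J)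
    (h : (2 * m + D) * J < D * s) (hx₁ : x₁ ∈ Icc (-J) J) (hx₂ : x₂ ∈ Icc (-J) J) :
    m / (x₁ + s) < (m + D) / (x₂ + s) := by
  have hJs : J < s := by nlinarith
  calc m / (x₁ + s) ≤ m / (s - J) := div_le_div_of_nonneg_left hm (by linarith) (by linarith [hx₁.1])
    _ < (m + D) / (s + J) := div_sub_lt_div_add hm hD hJ h
    _ ≤ (m + D) / (x₂ + s) :=
      div_le_div_of_nonneg_left (by linarith) (by linarith [hx₂.1]) (by linarith [hx₂.2])

lemma two_mul_add_mul_lt_mul_sq {D t J m : ℝ} (hD : 0 < D) (ht : 2 < t * D)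
    (hJ : D / (t * D - 2) < J) (hm : m ≤ J) : (2 * m + D) * J < D * (t * J ^ 2) := by
  have hc : 0 < t * D - 2 := by linarith
  have hJpos : 0 < J := lt_trans (by positivity) hJ
  have hDJ : D < J * (t * D - 2) := (div_lt_iff₀ hc).mp hJ
  calc (2 * m + D) * J ≤ (2 * J + D) * J := by gcongr
    _ < D * (t * J ^ 2) := by nlinarith

/-- For an integer `D ≥ 1` and a real `t > 2/D`, there exists `J₀ > 0`
such that for all `J ≥ J₀`, every integer `m` with `0 ≤ m ≤ J`, and all
`x₁, x₂ ∈ [-J, J]`, the slope of the ray towards any point of the row at height `m`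
is strictly smaller than the slope towards any point of the row at height `m + D`:
`m/(x₁ + tJ²) < (m + D)/(x₂ + tJ²)`. -/
theorem stmt16 (D : ℕ) (hD : 1 ≤ D) (t : ℝ) (ht : 2 / (D : ℝ) < t) :
    ∃ J0 : ℝ, 0 < J0 ∧ ∀ J : ℝ, J0 ≤ J → ∀ m : ℕ, (m : ℝ) ≤ J →
      ∀ x1 x2 : ℝ, x1 ∈ Set.Icc (-J) J → x2 ∈ Set.Icc (-J) J →
        (m : ℝ) / (x1 + t * J ^ 2) < ((m : ℝ) + (D : ℝ)) / (x2 + t * J ^ 2) := by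
  have hDpos : (0 : ℝ) < D := by exact_mod_cast hD
  have htD : 2 < t * D := (div_lt_iff₀ hDpos).mp ht
  have hc : 0 < t * D - 2 := by linarith
  refine ⟨D / (t * D - 2) + 1, by positivity, fun J hJ m hm x1 x2 hx1 hx2 => ?_⟩
  have hJpos : 0 < J := by linarith [show 0 < (D : ℝ) / (t * D - 2) by positivity]
  exact div_add_lt_div_add_of_mem_Icc m.cast_nonneg hDpos hJpos
    (two_mul_add_mul_lt_mul_sq hDpos htD (by linarith) hm) hx1 hx2
end
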